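/- arXiv:0905.1778 — 2 statements merged into one kernel-verified Lean document; each statement's English description precedes it below -/
import Mathlib

section
/- Let F be a finite field with q elements and let α be a generator of the multiplicative group F^× (so α has order q − 1). Let i ≤ j and 1 ≤ ℓ be natural numbers such that (ℓ − 1)·(j − i) is not divisible by q − 1. Then the 2 × 2 matrix [[α^i, α^j], [α^{ℓ·i}, α^{ℓ·j}]] over F has nonzero determinant, i.e., it has full rank. -/
/-- Base case of the full-rank induction: over a finite field with `q`
elements and `α` a generator of the multiplicative group (so `orderOf α = q - 1`),
if `i ≤ j`, `1 ≤ ℓ` and `q - 1` does not divide `(ℓ - 1)·(j - i)`, then the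
`2 × 2` matrix `[[α^i, α^j], [α^(ℓ·i), α^(ℓ·j)]]` has nonzero determinant. -/
theorem two_by_two_submatrix_full_rank (F : Type*) [Field F] [Fintype F]
    (q : ℕ) (hq : Fintype.card F = q) (α : F) (hα : orderOf α = q - 1)
    (hgen : ∀ x : F, x ≠ 0 → ∃ k : ℕ, α ^ k = x)
    (i j ℓ : ℕ) (hij : i ≤ j) (hℓ : 1 ≤ ℓ)
    (hndvd : ¬ (q - 1) ∣ (ℓ - 1) * (j - i)) :
    (Matrix.of ![![α ^ i, α ^ j], ![α ^ (ℓ * i), α ^ (ℓ * j)]]).det ≠ 0 := by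
  have hq2 : 2 ≤ q := hq ▸ Fintype.one_lt_card
  have hα0 : α ≠ 0 := by
    intro h
    have h1 := pow_orderOf_eq_one α
    rw [hα, h, zero_pow (by omega : q - 1 ≠ 0)] at h1
    exact zero_ne_one h1
  have h1 : j + ℓ * i ≤ i + ℓ * j := by nlinarith
  have key : (ℓ - 1) * (j - i) = (i + ℓ * j) - (j + ℓ * i) := by
    zify [hℓ, hij, h1]; ring
  intro h
  rw [Matrix.det_fin_two_of] at h
  have heq : α ^ (i + ℓ * j) = α ^ (j + ℓ * i) := by
    rw [pow_add, pow_add]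
    linear_combination h
  apply hndvd
  rw [key, ← hα]
  apply orderOf_dvd_of_pow_eq_one
  have : α ^ (j + ℓ * i) * α ^ ((i + ℓ * j) - (j + ℓ * i)) = α ^ (j + ℓ * i) * 1 := by
    rw [mul_one, ← pow_add, Nat.add_sub_cancel' h1, heq]
  exact mul_left_cancel₀ (pow_ne_zero _ hα0) this
end

section
/- Let F be a field, let n and t be natural numbers with t ≤ n, and let α ∈ F be an element whose powers α^0, …, α^{n−1} are pairwise distinct. Let x, x' : Fin n → F and let E be a subset of Fin n with |E| ≤ t. Suppose (1) x i = x' i for every i ∉ E, and (2) for every k ∈ Fin t, Σ_{i} α^{k·i} · (x i) = Σ_{i} α^{k·i} · (x' i). Then x = x'. -/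
/-- Recovery from at most `t` erasures: if `x` and `x'` agree outside a set
`E` of at most `t` coordinates and have the same `t` parity values
`Σ_i α^(k·i) · x i` for `k = 0, …, t-1`, where the powers `α^0, …, α^(n-1)`
are pairwise distinct, then `x = x'`. -/
theorem erasure_recovery (F : Type*) [Field F] (n t : ℕ) (ht : t ≤ n) (α : F)
    (hα : Function.Injective (fun i : Fin n => α ^ (i : ℕ)))
    (x x' : Fin n → F) (E : Finset (Fin n)) (hE : E.card ≤ t)
    (hagree : ∀ i, i ∉ E → x i = x' i)
    (hparity : ∀ k : Fin t,
      ∑ i : Fin n, α ^ ((k : ℕ) * (i : ℕ)) * x i =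
        ∑ i : Fin n, α ^ ((k : ℕ) * (i : ℕ)) * x' i) :
    x = x' := by
  set m := E.card with hm
  set e : Fin m ↪o Fin n := E.orderIsoOfFin rfl |>.toOrderEmbedding.trans
    (OrderEmbedding.subtype _) with he
  set f : Fin m → F := fun j => α ^ ((e j : Fin n) : ℕ) with hf
  have hfinj : Function.Injective f := fun a b hab => e.injective (hα hab)
  set v : Fin m → F := fun j => x (e j) - x' (e j) with hv
  have hkey : ∀ i : Fin m, (∑ j : Fin m, v j * f j ^ (i : ℕ)) = 0 := by
    intro i
    have hk : (i : ℕ) < t := lt_of_lt_of_le i.2 hE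
    have h1 : ∑ j : Fin n, α ^ ((i : ℕ) * (j : ℕ)) * (x j - x' j) = 0 := by
      have := hparity ⟨i, hk⟩
      simp only [mul_sub]
      rw [Finset.sum_sub_distrib, this]
      ring
    have h2 : ∑ j ∈ E, α ^ ((i : ℕ) * (j : ℕ)) * (x j - x' j) = 0 := by
      refine (Finset.sum_subset (Finset.subset_univ E) ?_).trans h1
      intro j _ hj
      rw [hagree j hj]; ring
    have h3 : ∑ j : Fin m, α ^ ((i : ℕ) * ((e j : Fin n) : ℕ)) * (x (e j) - x' (e j))
        = ∑ j ∈ E, α ^ ((i : ℕ) * (j : ℕ)) * (x j - x' j) := by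
      rw [← Finset.sum_attach E (fun j : Fin n => α ^ ((i : ℕ) * (j : ℕ)) * (x j - x' j))]
      exact Fintype.sum_equiv (E.orderIsoOfFin rfl).toEquiv _ _ (fun j => rfl)
    calc ∑ j : Fin m, v j * f j ^ (i : ℕ)
        = ∑ j : Fin m, α ^ ((i : ℕ) * ((e j : Fin n) : ℕ)) * (x (e j) - x' (e j)) := by
          refine Finset.sum_congr rfl fun j _ => ?_
          rw [hv, hf, ← pow_mul, mul_comm ((e j : Fin n) : ℕ)]
          ring
      _ = 0 := by rw [h3, h2]
  have hv0 : v = 0 := Matrix.eq_zero_of_forall_pow_sum_mul_pow_eq_zero hfinj hkey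
  funext i
  by_cases hi : i ∈ E
  · have : (⟨i, hi⟩ : E) = e ((E.orderIsoOfFin rfl).symm ⟨i, hi⟩) := by
      simp [he]
    have h := congrFun hv0 ((E.orderIsoOfFin rfl).symm ⟨i, hi⟩)
    have hei : (e ((E.orderIsoOfFin rfl).symm ⟨i, hi⟩) : Fin n) = i := by
      simp [he]
    have h' : x i - x' i = 0 := by rw [← hei]; simpa [hv] using h
    exact sub_eq_zero.mp h'
  · exact hagree i hi
end
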